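/- arXiv:math/0603293 — 10 statements merged into one kernel-verified Lean document; each statement's English description precedes it below -/
import Mathlib

section
/- In a finite regular linear space which is non-trivial (k ≥ 3 and at least two lines), Fisher's inequality holds: b ≥ v, and consequently r ≥ k. -/
/-- A finite regular linear space: a finite point set `P`, a set of lines
(each a finset of points), such that every line has exactly `k` points,
every point lies on exactly `r` lines, and any two distinct points lie on
exactly one common line. -/
structure RegularLinearSpace (P : Type*) [Fintype P] [DecidableEq P] where
  lines : Finset (Finset P)
  k : ℕ
  r : ℕ
  two_le_k : 2 ≤ k
  line_card : ∀ L ∈ lines, L.card = k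
  point_deg : ∀ p : P, (lines.filter (fun L => p ∈ L)).card = r
  exists_unique_line : ∀ p q : P, p ≠ q → ∃! L, L ∈ lines ∧ p ∈ L ∧ q ∈ L

/-- Fisher's inequality for a non-trivial finite regular linear space:
`b ≥ v` and `r ≥ k`. -/
theorem stmt_1 {P : Type*} [Fintype P] [DecidableEq P]
    (S : RegularLinearSpace P)
    (hk : 3 ≤ S.k) (hb : 2 ≤ S.lines.card) :
    Fintype.card P ≤ S.lines.card ∧ S.k ≤ S.r := by
  classical
  -- double counting: b * k = v * r
  have hcount : S.lines.card * S.k = Fintype.card P * S.r := by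
    calc S.lines.card * S.k = ∑ L ∈ S.lines, L.card := by
          rw [Finset.sum_congr rfl S.line_card, Finset.sum_const, smul_eq_mul]
      _ = ∑ L ∈ S.lines, ∑ p : P, if p ∈ L then 1 else 0 := by
          refine Finset.sum_congr rfl fun L _ => ?_
          rw [Finset.sum_ite_mem, Finset.univ_inter, Finset.sum_const, smul_eq_mul,
            mul_one]
      _ = ∑ p : P, ∑ L ∈ S.lines, if p ∈ L then 1 else 0 := Finset.sum_comm
      _ = ∑ p : P, (S.lines.filter (fun L => p ∈ L)).card := by
          refine Finset.sum_congr rfl fun p _ => ?_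
          rw [Finset.card_filter]
      _ = Fintype.card P * S.r := by
          simp [S.point_deg, Finset.card_univ]
  obtain ⟨L, hL⟩ := Finset.card_pos.mp (by omega : 0 < S.lines.card)
  -- there is a point off L
  have hex : ∃ p : P, p ∉ L := by
    by_contra h
    push_neg at h
    obtain ⟨M, hM, hML⟩ := Finset.exists_mem_ne hb L
    have hM2 : 1 < M.card := by rw [S.line_card M hM]; omega
    obtain ⟨q1, hq1, q2, hq2, hne⟩ := Finset.one_lt_card.mp hM2
    obtain ⟨N, _, huniq⟩ := S.exists_unique_line q1 q2 hne
    have h1 : M = N := huniq M ⟨hM, hq1, hq2⟩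
    have h2 : L = N := huniq L ⟨hL, h q1, h q2⟩
    exact hML (h1.trans h2.symm)
  obtain ⟨p, hp⟩ := hex
  -- r ≥ k : inject points of L into lines through p
  have hrk : S.k ≤ S.r := by
    have hf : ∀ q : P, ∃ N : Finset P, q ∈ L → N ∈ S.lines ∧ p ∈ N ∧ q ∈ N := by
      intro q
      by_cases hq : q ∈ L
      · obtain ⟨N, hN, _⟩ := S.exists_unique_line p q (fun h => hp (h ▸ hq))
        exact ⟨N, fun _ => hN⟩
      · exact ⟨∅, fun h => absurd h hq⟩
    choose f hfspec using hf
    have hcard : L.card ≤ (S.lines.filter (fun N => p ∈ N)).card := by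
      apply Finset.card_le_card_of_injOn f
      · intro q hq
        obtain ⟨h1, h2, _⟩ := hfspec q hq
        exact Finset.mem_filter.mpr ⟨h1, h2⟩
      · intro q1 hq1 q2 hq2 heq
        simp only [Finset.mem_coe] at hq1 hq2
        by_contra hne
        obtain ⟨h1, hp1, hm1⟩ := hfspec q1 hq1
        obtain ⟨h2, hp2, hm2⟩ := hfspec q2 hq2
        obtain ⟨N, _, huniq⟩ := S.exists_unique_line q1 q2 hne
        have e1 : f q1 = N := huniq _ ⟨h1, hm1, heq ▸ hm2⟩
        have e2 : L = N := huniq L ⟨hL, hq1, hq2⟩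
        exact hp (e2 ▸ e1 ▸ hp1)
    rw [S.line_card L hL, S.point_deg p] at hcard
    exact hcard
  refine ⟨?_, hrk⟩
  have h1 : Fintype.card P * S.k ≤ S.lines.card * S.k := by
    calc Fintype.card P * S.k ≤ Fintype.card P * S.r :=
          Nat.mul_le_mul_left _ hrk
      _ = S.lines.card * S.k := hcount.symm
  exact Nat.le_of_mul_le_mul_right h1 (by omega)
end

section
/- Let g be an automorphism of order 2 of a finite regular linear space with v points and k points on every line. Then g fixes (setwise) at least (v-1)/k lines. -/
/-- An automorphism of order 2 of a finite regular linear space with `v`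
points and `k` points on every line fixes (setwise) at least `(v-1)/k`
lines. -/
theorem stmt_3 {P : Type*} [Fintype P] [DecidableEq P]
    (S : RegularLinearSpace P) (g : Equiv.Perm P)
    (hauto : ∀ L ∈ S.lines, Finset.image g L ∈ S.lines)
    (horder : orderOf g = 2) :
    ((Fintype.card P : ℚ) - 1) / S.k ≤
      ((S.lines.filter (fun L => Finset.image g L = L)).card : ℚ) := by
  have hsq : g * g = 1 := by
    have h := pow_orderOf_eq_one g
    rwa [horder, pow_two] at h
  have hg2 : ∀ x, g (g x) = x := by
    intro x
    have := congrArg (fun e : Equiv.Perm P => e x) hsq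
    simpa using this
  set F := S.lines.filter (fun L => Finset.image g L = L) with hF
  have key : ∀ L ∈ S.lines, ∀ a b : P, a ≠ b → a ∈ L → b ∈ L →
      a ∈ Finset.image g L → b ∈ Finset.image g L → Finset.image g L = L := by
    intro L hL a b hab haL hbL haI hbI
    obtain ⟨M, _, huniq⟩ := S.exists_unique_line a b hab
    rw [huniq _ ⟨hauto L hL, haI, hbI⟩, huniq _ ⟨hL, haL, hbL⟩]
  set C : Finset P := F.biUnion id with hC
  have hcov : ∀ q : P, q ∉ C → g q = q := by
    intro q hq
    by_contra hne
    obtain ⟨L, ⟨hL, hqL, hgqL⟩, _⟩ := S.exists_unique_line q (g q) (fun h => hne h.symm)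
    have hfix : Finset.image g L = L := by
      refine key L hL q (g q) (fun h => hne h.symm) hqL hgqL ?_ ?_
      · have := Finset.mem_image_of_mem g hgqL
        rwa [hg2] at this
      · exact Finset.mem_image_of_mem g hqL
    exact hq (Finset.mem_biUnion.mpr ⟨L, Finset.mem_filter.mpr ⟨hL, hfix⟩, hqL⟩)
  have huncov : ∀ q q' : P, q ∉ C → q' ∉ C → q = q' := by
    intro q q' hq hq'
    by_contra hne
    obtain ⟨L, ⟨hL, hqL, hq'L⟩, _⟩ := S.exists_unique_line q q' hne
    have hfix : Finset.image g L = L := by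
      refine key L hL q q' hne hqL hq'L ?_ ?_
      · have := Finset.mem_image_of_mem g hqL
        rwa [hcov q hq] at this
      · have := Finset.mem_image_of_mem g hq'L
        rwa [hcov q' hq'] at this
    exact hq (Finset.mem_biUnion.mpr ⟨L, Finset.mem_filter.mpr ⟨hL, hfix⟩, hqL⟩)
  have h1 : C.card ≤ F.card * S.k := by
    calc C.card ≤ ∑ L ∈ F, (id L).card := Finset.card_biUnion_le
      _ ≤ ∑ L ∈ F, S.k := Finset.sum_le_sum
          (fun L hL => le_of_eq (S.line_card L (Finset.mem_filter.mp hL).1))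
      _ = F.card * S.k := by rw [Finset.sum_const, smul_eq_mul]
  have h2 : Cᶜ.card ≤ 1 :=
    Finset.card_le_one.mpr (fun a ha b hb =>
      huncov a b (Finset.mem_compl.mp ha) (Finset.mem_compl.mp hb))
  have h3 : Fintype.card P ≤ F.card * S.k + 1 := by
    have := Finset.card_add_card_compl C
    omega
  have hk : (0:ℚ) < (S.k : ℚ) := by
    have := S.two_le_k; positivity
  rw [div_le_iff₀ hk]
  have : (Fintype.card P : ℚ) ≤ (F.card : ℚ) * S.k + 1 := by
    exact_mod_cast h3
  linarith
end

section
/- Let G act line-transitively on a finite regular linear space with v points and b lines, let g ∈ G be an involution, let n_g = |g^G| be the size of its conjugacy class, and let r_g = |g^G ∩ G_L| be the number of conjugates of g stabilizing a fixed line L. Then n_g(v−1)/(b·r_g) ≤ k ≤ r_g·v/n_g + 1, where k is the number of points on each line. -/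
set_option linter.unusedSectionVars false
set_option linter.unusedVariables false
set_option maxHeartbeats 800000

section Aux
variable {P G : Type*} [Fintype P] [DecidableEq P] [Group G] [Fintype G] [MulAction G P]

lemma aux_image_image (a b : G) (M : Finset P) :
    (M.image (b • ·)).image (a • ·) = M.image ((a * b) • ·) := by
  rw [Finset.image_image]
  exact Finset.image_congr (fun p _ => (mul_smul a b p).symm)

lemma aux_fixed_lines_bound (S : RegularLinearSpace P)
    (hpres : ∀ (g : G), ∀ L ∈ S.lines, Finset.image (g • ·) L ∈ S.lines)
    (x : G) (hx2 : x ^ 2 = 1) :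
    Fintype.card P - 1 ≤ (S.lines.filter (fun M => M.image (x • ·) = M)).card * S.k := by
  classical
  set FL := S.lines.filter (fun M => M.image (x • ·) = M) with hFLdef
  set covered := FL.biUnion id with hcovdef
  have hxx : ∀ p : P, x • x • p = p := by
    intro p; rw [smul_smul, ← pow_two, hx2, one_smul]
  have hfix : ∀ p : P, p ∉ covered → x • p = p := by
    intro p hp
    by_contra hne
    obtain ⟨M, ⟨hM, hpM, hxpM⟩, huniq⟩ :=
      S.exists_unique_line p (x • p) (fun h => hne h.symm)
    have hMim : M.image (x • ·) = M := by
      apply huniq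
      refine ⟨hpres x M hM, ?_, Finset.mem_image_of_mem _ hpM⟩
      have h1 : x • (x • p) ∈ M.image (x • ·) := Finset.mem_image_of_mem _ hxpM
      rwa [hxx p] at h1
    exact hp (Finset.mem_biUnion.2 ⟨M, Finset.mem_filter.2 ⟨hM, hMim⟩, hpM⟩)
  have huncov : ∀ p ∉ covered, ∀ q ∉ covered, p = q := by
    intro p hp q hq
    by_contra hpq
    obtain ⟨N, ⟨hN, hpN, hqN⟩, huniq⟩ := S.exists_unique_line p q hpq
    have hNim : N.image (x • ·) = N := by
      apply huniq
      refine ⟨hpres x N hN, ?_, ?_⟩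
      · have h1 : x • p ∈ N.image (x • ·) := Finset.mem_image_of_mem _ hpN
        rwa [hfix p hp] at h1
      · have h1 : x • q ∈ N.image (x • ·) := Finset.mem_image_of_mem _ hqN
        rwa [hfix q hq] at h1
    exact hp (Finset.mem_biUnion.2 ⟨N, Finset.mem_filter.2 ⟨hN, hNim⟩, hpN⟩)
  have h1 : ((Finset.univ : Finset P) \ covered).card ≤ 1 := by
    apply Finset.card_le_one.2
    intro a ha b hb
    exact huncov a (Finset.mem_sdiff.1 ha).2 b (Finset.mem_sdiff.1 hb).2
  have h2 := Finset.card_sdiff_add_card_eq_card (Finset.subset_univ covered)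
  rw [Finset.card_univ] at h2
  have h3 : covered.card ≤ FL.card * S.k := by
    calc covered.card ≤ ∑ M ∈ FL, (id M).card := Finset.card_biUnion_le
    _ = ∑ _M ∈ FL, S.k := by
        refine Finset.sum_congr rfl (fun M hM => ?_)
        exact S.line_card M (Finset.mem_filter.1 hM).1
    _ = FL.card * S.k := by rw [Finset.sum_const, smul_eq_mul]
  omega

lemma aux_sq (m : ℕ) : m * m - m = m * (m - 1) := by
  rw [Nat.mul_sub_one]

lemma aux_pair_count (S : RegularLinearSpace P) :
    S.lines.card * (S.k * (S.k - 1)) = Fintype.card P * (Fintype.card P - 1) := by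
  classical
  have hdisj : ∀ M ∈ S.lines, ∀ N ∈ S.lines, M ≠ N →
      Disjoint (Finset.offDiag M) (Finset.offDiag N) := by
    intro M hM N hN hMN
    rw [Finset.disjoint_left]
    rintro ⟨p, q⟩ hpM hpN
    rw [Finset.mem_offDiag] at hpM hpN
    obtain ⟨O, _, huniq⟩ := S.exists_unique_line p q hpM.2.2
    exact hMN ((huniq M ⟨hM, hpM.1, hpM.2.1⟩).trans (huniq N ⟨hN, hpN.1, hpN.2.1⟩).symm)
  have hcov : (Finset.univ : Finset P).offDiag = S.lines.biUnion (fun M => M.offDiag) := by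
    ext ⟨p, q⟩
    simp only [Finset.mem_offDiag, Finset.mem_univ, true_and, Finset.mem_biUnion]
    constructor
    · intro hpq
      obtain ⟨M, ⟨hM, hpM, hqM⟩, _⟩ := S.exists_unique_line p q hpq
      exact ⟨M, hM, hpM, hqM, hpq⟩
    · rintro ⟨M, _, _, _, hpq⟩; exact hpq
  have hcard := congrArg Finset.card hcov
  rw [Finset.offDiag_card, Finset.card_biUnion hdisj, Finset.card_univ] at hcard
  have hsum : ∑ M ∈ S.lines, M.offDiag.card = S.lines.card * (S.k * (S.k - 1)) := by
    rw [Finset.sum_congr rfl (fun M hM => ?_), Finset.sum_const, smul_eq_mul]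
    rw [Finset.offDiag_card, S.line_card M hM, aux_sq]
  rw [hsum] at hcard
  rw [← hcard, aux_sq]
end Aux

section Main
variable {P G : Type*} [Fintype P] [DecidableEq P] [Group G] [Fintype G] [MulAction G P]

lemma aux_image_image' (a b : G) (M : Finset P) :
    (M.image (b • ·)).image (a • ·) = M.image ((a * b) • ·) := by
  rw [Finset.image_image]
  exact Finset.image_congr (fun p _ => (mul_smul a b p).symm)

lemma aux_conj_count (g : G) (L L' : Finset P) (h : G)
    (hh : Finset.image (h • ·) L = L') :
    Nat.card {x : G // IsConj g x ∧ Finset.image (x • ·) L' = L'} =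
    Nat.card {x : G // IsConj g x ∧ Finset.image (x • ·) L = L} := by
  refine (Nat.card_congr (Equiv.subtypeEquiv (MulAut.conj h).toEquiv fun x => ?_)).symm
  simp only [MulAut.conj_apply, MulEquiv.toEquiv_eq_coe, EquivLike.coe_coe]
  have e1 : Finset.image ((h * x * h⁻¹) • ·) L' = Finset.image ((h * x) • ·) L := by
    rw [← hh, aux_image_image']
    have : h * x * h⁻¹ * h = h * x := by group
    rw [this]
  have e2 : Finset.image ((h * x) • ·) L
      = Finset.image (h • ·) (Finset.image (x • ·) L) := (aux_image_image' h x L).symm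
  constructor
  · rintro ⟨hc, him⟩
    refine ⟨hc.trans (isConj_iff.2 ⟨h, rfl⟩), ?_⟩
    rw [e1, e2, him, hh]
  · rintro ⟨hc, him⟩
    have hback : IsConj (h * x * h⁻¹) x := isConj_iff.2 ⟨h⁻¹, by group⟩
    refine ⟨hc.trans hback, ?_⟩
    rw [e1, e2, ← hh] at him
    exact Finset.image_injective (MulAction.injective h) him

lemma aux_natcard_filter (p : G → Prop) [DecidablePred p] :
    Nat.card {x : G // p x} = (Finset.univ.filter p).card := by
  rw [Nat.card_eq_fintype_card, Fintype.card_subtype]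

lemma aux_double_count {α β : Type*} (s : Finset α) (t : Finset β) (p : α → β → Prop)
    [∀ a b, Decidable (p a b)] :
    ∑ y ∈ t, (s.filter (fun x => p x y)).card
      = ∑ x ∈ s, (t.filter (fun y => p x y)).card := by
  simp only [Finset.card_filter]
  exact Finset.sum_comm

end Main


/-- If `G` acts line-transitively on a finite regular linear space, `g ∈ G`
is an involution with conjugacy class of size `n_g`, of which `r_g` members
stabilize a fixed line `L`, then `n_g(v-1)/(b·r_g) ≤ k ≤ r_g·v/n_g + 1`. -/
theorem stmt_6 {P G : Type*} [Fintype P] [DecidableEq P]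
    [Group G] [Fintype G] [MulAction G P]
    (S : RegularLinearSpace P)
    (hpres : ∀ (g : G), ∀ L ∈ S.lines, Finset.image (g • ·) L ∈ S.lines)
    (htrans : ∀ L ∈ S.lines, ∀ L' ∈ S.lines,
      ∃ g : G, Finset.image (g • ·) L = L')
    (g : G) (hg : g ≠ 1) (hg2 : g ^ 2 = 1)
    (L : Finset P) (hL : L ∈ S.lines)
    (n_g r_g : ℕ)
    (hn : n_g = Nat.card {x : G // IsConj g x})
    (hr : r_g = Nat.card {x : G // IsConj g x ∧ Finset.image (x • ·) L = L}) :
    (n_g : ℚ) * ((Fintype.card P : ℚ) - 1) / ((S.lines.card : ℚ) * r_g) ≤ S.k ∧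
    (S.k : ℚ) ≤ (r_g : ℚ) * (Fintype.card P : ℚ) / n_g + 1 := by
  classical
  have hk2 := S.two_le_k
  have hkv : S.k ≤ Fintype.card P := by
    rw [← S.line_card L hL]; exact Finset.card_le_univ L
  have hv2 : 2 ≤ Fintype.card P := le_trans hk2 hkv
  have hb1 : 1 ≤ S.lines.card := Finset.card_pos.2 ⟨L, hL⟩
  set C := Finset.univ.filter (fun x : G => IsConj g x) with hCdef
  have hnC : n_g = C.card := by rw [hn, aux_natcard_filter]
  have hn1 : 1 ≤ n_g := by
    rw [hnC]
    exact Finset.card_pos.2 ⟨g, Finset.mem_filter.2 ⟨Finset.mem_univ g, IsConj.refl g⟩⟩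
  have hrfilter : ∀ L' : Finset P,
      Nat.card {x : G // IsConj g x ∧ Finset.image (x • ·) L' = L'}
        = (C.filter (fun x => Finset.image (x • ·) L' = L')).card := by
    intro L'
    rw [aux_natcard_filter, hCdef, Finset.filter_filter]
  have hconst : ∀ L' ∈ S.lines,
      (C.filter (fun x => Finset.image (x • ·) L' = L')).card = r_g := by
    intro L' hL'
    obtain ⟨h, hh⟩ := htrans L hL L' hL'
    rw [← hrfilter L', aux_conj_count g L L' h hh, hr]
  have hsum1 : ∑ L' ∈ S.lines,
      (C.filter (fun x => Finset.image (x • ·) L' = L')).card = S.lines.card * r_g := by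
    rw [Finset.sum_congr rfl hconst, Finset.sum_const, smul_eq_mul]
  have hdouble : ∑ L' ∈ S.lines,
      (C.filter (fun x => Finset.image (x • ·) L' = L')).card
      = ∑ x ∈ C, (S.lines.filter (fun M => Finset.image (x • ·) M = M)).card :=
    aux_double_count C S.lines (fun x M => Finset.image (x • ·) M = M)
  have hx2 : ∀ x ∈ C, x ^ 2 = 1 := by
    intro x hx
    obtain ⟨c, rfl⟩ := isConj_iff.1 (Finset.mem_filter.1 hx).2
    rw [conj_pow, hg2, mul_one, mul_inv_cancel]
  have hmain : n_g * (Fintype.card P - 1) ≤ S.lines.card * r_g * S.k := by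
    calc n_g * (Fintype.card P - 1) = ∑ _x ∈ C, (Fintype.card P - 1) := by
          rw [Finset.sum_const, smul_eq_mul, hnC]
    _ ≤ ∑ x ∈ C, (S.lines.filter (fun M => Finset.image (x • ·) M = M)).card * S.k :=
          Finset.sum_le_sum (fun x hx => aux_fixed_lines_bound S hpres x (hx2 x hx))
    _ = (∑ x ∈ C, (S.lines.filter (fun M => Finset.image (x • ·) M = M)).card) * S.k :=
          (Finset.sum_mul _ _ _).symm
    _ = S.lines.card * r_g * S.k := by rw [← hdouble, hsum1]
  have hr1 : 1 ≤ r_g := by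
    rcases Nat.eq_zero_or_pos r_g with h0 | h; swap; · exact h
    rw [h0, Nat.mul_zero, Nat.zero_mul] at hmain
    have := Nat.mul_pos (by omega : 0 < n_g) (by omega : 0 < Fintype.card P - 1)
    omega
  -- second nat inequality
  have h7 : n_g * (S.k - 1) * (Fintype.card P - 1)
      ≤ r_g * Fintype.card P * (Fintype.card P - 1) := by
    have h5 : n_g * (Fintype.card P - 1) * (S.k - 1)
        ≤ S.lines.card * r_g * S.k * (S.k - 1) := Nat.mul_le_mul_right _ hmain
    have e2 : S.lines.card * r_g * S.k * (S.k - 1)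
        = r_g * (Fintype.card P * (Fintype.card P - 1)) := by
      rw [show S.lines.card * r_g * S.k * (S.k - 1)
          = r_g * (S.lines.card * (S.k * (S.k - 1))) from by ring, aux_pair_count S]
    calc n_g * (S.k - 1) * (Fintype.card P - 1)
        = n_g * (Fintype.card P - 1) * (S.k - 1) := by ring
    _ ≤ S.lines.card * r_g * S.k * (S.k - 1) := h5
    _ = r_g * Fintype.card P * (Fintype.card P - 1) := by rw [e2]; ring
  have h8 : n_g * (S.k - 1) ≤ r_g * Fintype.card P :=
    Nat.le_of_mul_le_mul_right h7 (by omega)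
  -- cast to ℚ
  have h1v : 1 ≤ Fintype.card P := by omega
  have h1k : 1 ≤ S.k := by omega
  have c1 : (n_g : ℚ) * ((Fintype.card P : ℚ) - 1)
      ≤ (S.lines.card : ℚ) * r_g * S.k := by
    have := (Nat.cast_le (α := ℚ)).2 hmain
    rwa [Nat.cast_mul, Nat.cast_mul, Nat.cast_mul, Nat.cast_sub h1v, Nat.cast_one] at this
  have c2 : (n_g : ℚ) * ((S.k : ℚ) - 1) ≤ (r_g : ℚ) * Fintype.card P := by
    have := (Nat.cast_le (α := ℚ)).2 h8
    rwa [Nat.cast_mul, Nat.cast_mul, Nat.cast_sub h1k, Nat.cast_one] at this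
  have hbpos : (0 : ℚ) < (S.lines.card : ℚ) * r_g := by
    have : (0:ℚ) < (S.lines.card : ℚ) := by exact_mod_cast hb1
    have : (0:ℚ) < (r_g : ℚ) := by exact_mod_cast hr1
    positivity
  have hnpos : (0 : ℚ) < (n_g : ℚ) := by exact_mod_cast hn1
  constructor
  · rw [div_le_iff₀ hbpos]
    calc (n_g : ℚ) * ((Fintype.card P : ℚ) - 1)
        ≤ (S.lines.card : ℚ) * r_g * S.k := c1
    _ = (S.k : ℚ) * ((S.lines.card : ℚ) * r_g) := by ring
  · have : (S.k : ℚ) - 1 ≤ (r_g : ℚ) * (Fintype.card P : ℚ) / n_g := by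
      rw [le_div_iff₀ hnpos]
      calc ((S.k : ℚ) - 1) * n_g = (n_g : ℚ) * ((S.k : ℚ) - 1) := by ring
      _ ≤ (r_g : ℚ) * Fintype.card P := c2
    linarith
end

section
/- For every integer q ≥ 3, the number q⁴ − q³ + q² − 2q is not of the form m(m−2) for any integer m, because (q² − q/2 + 1)(q² − q/2 − 1) < q⁴ − q³ + q² − 2q < (q² − q/2 + 2)(q² − q/2) when q is even; in particular, for even q ≥ 4 there is no integer k with (2k)(2k−2) = q⁴ − q³ + q² − 2q. -/
/-- For every even integer `q ≥ 4` there is no integer `k` with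
`(2k)(2k-2) = q⁴ - q³ + q² - 2q`. -/
theorem stmt_10 (q : ℤ) (hq : 4 ≤ q) (heven : Even q) :
    ¬ ∃ k : ℤ, (2 * k) * (2 * k - 2) = q ^ 4 - q ^ 3 + q ^ 2 - 2 * q := by
  rintro ⟨k, hk⟩
  obtain ⟨t, ht⟩ := heven
  have ht2 : 2 ≤ t := by omega
  set m : ℤ := 2 * k - 1 with hm
  set n : ℤ := 4 * t ^ 2 - t with hn
  have hn0 : 0 ≤ n := by nlinarith
  subst ht
  have h1 : n ^ 2 < m ^ 2 := by rw [hm, hn]; nlinarith [hk]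
  have h2 : m ^ 2 < (n + 1) ^ 2 := by rw [hm, hn]; nlinarith [hk]
  have ha1 : n < |m| := by
    apply lt_of_pow_lt_pow_left₀ 2 (abs_nonneg m)
    rwa [sq_abs]
  have ha2 : |m| < n + 1 := by
    apply lt_of_pow_lt_pow_left₀ 2 (by omega : (0:ℤ) ≤ n + 1)
    rwa [sq_abs]
  omega
end

section
/- For every integer q ≥ 17 there is no integer k with (2k)(2k−2) = q⁶ − q⁵ + q⁴ − 2q³ + 2q² − 2q. -/
/-- For every integer `q ≥ 17` there is no integer `k` with
`(2k)(2k-2) = q⁶ - q⁵ + q⁴ - 2q³ + 2q² - 2q`. -/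
theorem stmt_11 (q : ℤ) (hq : 17 ≤ q) :
    ¬ ∃ k : ℤ, (2 * k) * (2 * k - 2) =
      q ^ 6 - q ^ 5 + q ^ 4 - 2 * q ^ 3 + 2 * q ^ 2 - 2 * q := by
  rintro ⟨k, hk⟩
  set m : ℤ := 8 * (2 * k - 1) with hmdef
  set A : ℤ := 8 * q ^ 3 - 4 * q ^ 2 + 3 * q - 7 with hAdef
  have hm : m ^ 2 = 64 * (q ^ 6 - q ^ 5 + q ^ 4 - 2 * q ^ 3 + 2 * q ^ 2 - 2 * q) + 64 := by
    have : m ^ 2 = 64 * ((2 * k) * (2 * k - 2)) + 64 := by ring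
    rw [this, hk]
  have hA0 : 0 < A := by nlinarith
  have h1 : A ^ 2 < m ^ 2 := by nlinarith
  have h2 : m ^ 2 < (A + 1) ^ 2 := by nlinarith
  have habs : |m| ^ 2 = m ^ 2 := sq_abs m
  have hA : A < |m| := by nlinarith [abs_nonneg m]
  have hA1 : |m| < A + 1 := by nlinarith [abs_nonneg m]
  omega
end

section
/- Let v = q³(q+1)(q²+q+1)/6 and suppose 3k(k−1) + x ≡ 0 (mod m) for some integer m dividing v with gcd(m,6)=1 and x ∈ {1,2}. Then 9 − 12x is a quadratic residue modulo m. In particular, if m = 25 then neither x = 1 nor x = 2 is possible. -/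
/-- Let `v = q³(q+1)(q²+q+1)/6` and suppose `3k(k-1) + x ≡ 0 (mod m)` for some
integer `m ≥ 2` dividing `v` with `gcd(m,6) = 1` and `x ∈ {1,2}`. Then
`9 - 12x` is a quadratic residue modulo `m`; in particular `m ≠ 25`. -/
theorem stmt_14 (q v k m x : ℤ) (hm : 2 ≤ m)
    (hv : 6 * v = q ^ 3 * (q + 1) * (q ^ 2 + q + 1))
    (hmv : m ∣ v) (hcop : IsCoprime m 6)
    (hx : x = 1 ∨ x = 2)
    (hcong : m ∣ 3 * k * (k - 1) + x) :
    (∃ y : ℤ, m ∣ y ^ 2 - (9 - 12 * x)) ∧ m ≠ 25 := by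
  constructor
  · refine ⟨3 * (2 * k - 1), ?_⟩
    have : (3 * (2 * k - 1)) ^ 2 - (9 - 12 * x) = 12 * (3 * k * (k - 1) + x) := by ring
    rw [this]
    exact Dvd.dvd.mul_left hcong 12
  · rintro rfl
    have h0 : ((3 * k * (k - 1) + x : ℤ) : ZMod 25) = 0 :=
      (ZMod.intCast_zmod_eq_zero_iff_dvd _ 25).mpr hcong
    push_cast at h0
    have key : ∀ a : ZMod 25, 3 * a * (a - 1) + 1 ≠ 0 ∧ 3 * a * (a - 1) + 2 ≠ 0 := by
      decide
    rcases hx with rfl | rfl <;> push_cast at h0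
    · exact (key _).1 h0
    · exact (key _).2 h0
end

section
/- Let G be a finite group acting line-transitively on a finite regular linear space, let H be a subgroup of the point stabilizer G_α, and suppose the normalizer N_G(H) is not contained in G_α. Then H stabilizes some line of the space. -/
theorem MulAction.le_stabilizer_smul_of_mem_normalizer {G α : Type*} [Group G] [MulAction G α]
    {H : Subgroup G} {a : α} {g : G} (hH : H ≤ stabilizer G a)
    (hg : g ∈ Subgroup.normalizer (H : Set G)) : H ≤ stabilizer G (g • a) := by
  intro h hh
  have hconj : g⁻¹ * h * g ∈ H := (Subgroup.mem_normalizer_iff''.mp hg h).mp hh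
  calc h • g • a = g • (g⁻¹ * h * g) • a := by
        simp only [smul_smul, mul_inv_cancel_left, mul_assoc]
    _ = g • a := by rw [hH hconj]

theorem RegularLinearSpace.image_eq_of_fixes {P : Type*} [Fintype P] [DecidableEq P]
    (S : RegularLinearSpace P) {f : P → P} (hf : ∀ L ∈ S.lines, L.image f ∈ S.lines)
    {p q : P} (hpq : p ≠ q) (hfp : f p = p) (hfq : f q = q)
    {L : Finset P} (hL : L ∈ S.lines) (hp : p ∈ L) (hq : q ∈ L) : L.image f = L := by
  obtain ⟨M, -, huniq⟩ := S.exists_unique_line p q hpq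
  have hpf : p ∈ L.image f := Finset.mem_image.mpr ⟨p, hp, hfp⟩
  have hqf : q ∈ L.image f := Finset.mem_image.mpr ⟨q, hq, hfq⟩
  exact (huniq _ ⟨hf L hL, hpf, hqf⟩).trans (huniq L ⟨hL, hp, hq⟩).symm

theorem stmt_15_general {P G : Type*} [Fintype P] [DecidableEq P]
    [Group G] [MulAction G P]
    (S : RegularLinearSpace P)
    (hpres : ∀ (g : G), ∀ L ∈ S.lines, Finset.image (g • ·) L ∈ S.lines)
    (α : P) (H : Subgroup G)
    (hH : H ≤ MulAction.stabilizer G α)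
    (hN : ¬ Subgroup.normalizer (H : Set G) ≤ MulAction.stabilizer G α) :
    ∃ L ∈ S.lines, ∀ h ∈ H, Finset.image (h • ·) L = L := by
  obtain ⟨g, hgN, hgα⟩ := SetLike.not_le_iff_exists.mp hN
  have hne : α ≠ g • α := Ne.symm hgα
  have hHg : H ≤ MulAction.stabilizer G (g • α) :=
    MulAction.le_stabilizer_smul_of_mem_normalizer hH hgN
  obtain ⟨L, ⟨hL, hαL, hgαL⟩, -⟩ := S.exists_unique_line α (g • α) hne
  exact ⟨L, hL, fun h hh => S.image_eq_of_fixes (hpres h) hne (hH hh) (hHg hh) hL hαL hgαL⟩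

/-- If `G` acts line-transitively on a finite regular linear space, `H` is a
subgroup of the stabilizer of a point `α`, and `N_G(H)` is not contained in
the stabilizer of `α`, then `H` stabilizes some line setwise. -/
theorem stmt_15 {P G : Type*} [Fintype P] [DecidableEq P]
    [Group G] [Fintype G] [MulAction G P]
    (S : RegularLinearSpace P)
    (hpres : ∀ (g : G), ∀ L ∈ S.lines, Finset.image (g • ·) L ∈ S.lines)
    (htrans : ∀ L ∈ S.lines, ∀ L' ∈ S.lines,
      ∃ g : G, Finset.image (g • ·) L = L')
    (α : P) (H : Subgroup G)
    (hH : H ≤ MulAction.stabilizer G α)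
    (hN : ¬ Subgroup.normalizer (H : Set G) ≤ MulAction.stabilizer G α) :
    ∃ L ∈ S.lines, ∀ h ∈ H, Finset.image (h • ·) L = L :=
  stmt_15_general S hpres α H hH hN
end

section
/- Suppose a finite group G acts line-transitively on a finite regular linear space which is not a projective plane (i.e. b > v), and let H, K be subgroups with G_α ≤ H < K ≤ G for a point stabilizer G_α, with |K : H| = 2. Then a contradiction follows; i.e., no such chain with index 2 can exist. -/
/-! For `G_α ≤ J`, the ordered pairs of distinct points lying in a common translate of the
orbit `J • α` form a `G`-invariant set. Counting it through the lines (line-transitivity gives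
every line the same number of such pairs) and through the first point shows that `b` divides
`w * ([J : G_α] - 1)`, where `w = |G • α| ≤ v`. For `J = H` and `J = K` this reads
`b ∣ w * (m - 1)` and `b ∣ w * (2 * m - 1)` with `m = [H : G_α]`, so `b ∣ w`, which is
impossible for `0 < w ≤ v < b`. -/

open Finset MulAction Pointwise
open scoped Classical

theorem ncard_orbit_subgroup_eq_relIndex {P G : Type*} [Group G] [MulAction G P] (J : Subgroup G) (α : P) :
    (orbit J α).ncard = (stabilizer G α).relIndex J := by
  rw [← index_stabilizer]
  rfl

section InvariantPairs

variable {P G : Type*} [DecidableEq P] [Group G] [MulAction G P]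

theorem card_inter_product_smul {T : Finset (P × P)} (hT : ∀ (g : G) x, g • x ∈ T ↔ x ∈ T)
    (g : G) (A : Finset P) :
    #(T ∩ (g • A) ×ˢ (g • A)) = #(T ∩ A ×ˢ A) := by
  refine card_nbij' (g⁻¹ • ·) (g • ·) ?_ ?_ ?_ ?_ <;> intro x hx <;>
    simp only [coe_inter, coe_product, Set.mem_inter_iff, Set.mem_prod, mem_coe] at hx ⊢
  · exact ⟨(hT _ _).2 hx.1, inv_smul_mem_iff.2 hx.2.1, inv_smul_mem_iff.2 hx.2.2⟩
  · exact ⟨(hT _ _).2 hx.1, smul_mem_smul_finset hx.2.1, smul_mem_smul_finset hx.2.2⟩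
  · exact smul_inv_smul g x
  · exact inv_smul_smul g x

variable [Fintype P]

theorem card_eq_card_orbit_mul_card_fiber {T : Finset (P × P)}
    (hT : ∀ (g : G) x, g • x ∈ T ↔ x ∈ T) {α : P} (hTα : ∀ x ∈ T, x.1 ∈ orbit G α) :
    #T = #(orbit G α).toFinset * #{q | (α, q) ∈ T} := by
  rw [card_eq_sum_card_fiberwise (f := Prod.fst) fun x hx => Set.mem_toFinset.2 (hTα x hx)]
  refine sum_const_nat fun p hp => ?_
  obtain ⟨g, rfl⟩ := Set.mem_toFinset.1 hp
  refine card_nbij' (fun x => g⁻¹ • x.2) (fun q => (g • α, g • q)) ?_ ?_ ?_ ?_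
  · rintro ⟨p, q⟩ hx
    obtain ⟨hx, rfl⟩ := mem_filter.1 hx
    simpa using (hT g⁻¹ _).2 hx
  · intro q hq
    exact mem_filter.2 ⟨(hT g (α, q)).2 (mem_filter.1 hq).2, rfl⟩
  · rintro ⟨p, q⟩ hx
    obtain ⟨-, rfl⟩ := mem_filter.1 hx
    simp
  · intro q _
    simp

end InvariantPairs

section BlockPairs

variable {P G : Type*} [Fintype P] [DecidableEq P] [Group G] [MulAction G P]

/-- Pairs `(g • α, q)` with `q ≠ g • α` in `g • (J • α)`; when `G_α ≤ J` this translate does not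
depend on the choice of `g`. -/
noncomputable def blockPairs (J : Subgroup G) (α : P) : Finset (P × P) :=
  {x | x.1 ≠ x.2 ∧ ∃ g : G, g • α = x.1 ∧ g⁻¹ • x.2 ∈ orbit J α}

theorem mem_blockPairs {J : Subgroup G} {α : P} {x : P × P} :
    x ∈ blockPairs J α ↔ x.1 ≠ x.2 ∧ ∃ g : G, g • α = x.1 ∧ g⁻¹ • x.2 ∈ orbit J α := by
  simp [blockPairs]

theorem smul_mem_blockPairs_iff {J : Subgroup G} {α : P} (g : G) (x : P × P) :
    g • x ∈ blockPairs J α ↔ x ∈ blockPairs J α := by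
  simp only [mem_blockPairs, Prod.smul_fst, Prod.smul_snd, ne_eq, smul_left_cancel_iff]
  refine and_congr_right fun _ =>
    ⟨fun ⟨h, hh, hJ⟩ => ⟨g⁻¹ * h, ?_, ?_⟩, fun ⟨h, hh, hJ⟩ => ⟨g * h, ?_, ?_⟩⟩
  all_goals simp_all [mul_smul]

theorem filter_mk_mem_blockPairs {J : Subgroup G} {α : P} (hJ : stabilizer G α ≤ J) :
    ({q | (α, q) ∈ blockPairs J α} : Finset P) = (orbit J α).toFinset.erase α := by
  ext q
  simp only [mem_filter, mem_univ, true_and, mem_blockPairs, mem_erase, Set.mem_toFinset]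
  refine and_congr ne_comm ⟨fun ⟨g, hg, hq⟩ => ?_, fun hq => ⟨1, one_smul G α, by simpa⟩⟩
  simpa [Subgroup.mk_smul] using mem_orbit_of_mem_orbit ⟨g, hJ hg⟩ hq

end BlockPairs

namespace RegularLinearSpace

variable {P G : Type*} [Fintype P] [DecidableEq P] [Group G] [MulAction G P]

def IsLineTransitive (G : Type*) [Group G] [MulAction G P] (S : RegularLinearSpace P) : Prop :=
  ∀ L ∈ S.lines, ∀ L' ∈ S.lines, ∃ g : G, L.image (g • ·) = L'

theorem card_eq_card_lines_mul_card_inter_product (S : RegularLinearSpace P)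
    (htrans : S.IsLineTransitive G) {T : Finset (P × P)} (hT : ∀ (g : G) x, g • x ∈ T ↔ x ∈ T)
    (hT_ne : ∀ x ∈ T, x.1 ≠ x.2) {L : Finset P} (hL : L ∈ S.lines) :
    #T = #S.lines * #(T ∩ L ×ˢ L) := by
  have hcover : S.lines.biUnion (fun M => T ∩ M ×ˢ M) = T := by
    refine Subset.antisymm (biUnion_subset.2 fun _ _ => inter_subset_left) fun x hx => ?_
    obtain ⟨M, ⟨hM, h₁, h₂⟩, -⟩ := S.exists_unique_line _ _ (hT_ne x hx)
    exact mem_biUnion.2 ⟨M, hM, mem_inter.2 ⟨hx, mem_product.2 ⟨h₁, h₂⟩⟩⟩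
  have hdisj : (S.lines : Set (Finset P)).PairwiseDisjoint (fun M => T ∩ M ×ˢ M) := by
    intro M hM M' hM' hne
    refine disjoint_left.2 fun x hx hx' => hne ?_
    simp only [mem_inter, mem_product] at hx hx'
    exact (S.exists_unique_line _ _ (hT_ne x hx.1)).unique ⟨hM, hx.2⟩ ⟨hM', hx'.2⟩
  calc #T = ∑ M ∈ S.lines, #(T ∩ M ×ˢ M) := by rw [← card_biUnion hdisj, hcover]
    _ = #S.lines * #(T ∩ L ×ˢ L) := sum_const_nat fun M hM => by
      obtain ⟨g, rfl⟩ := htrans L hL M hM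
      exact card_inter_product_smul hT g L

theorem card_lines_dvd (S : RegularLinearSpace P) (htrans : S.IsLineTransitive G)
    (hS : S.lines.Nonempty) {J : Subgroup G} {α : P} (hJ : stabilizer G α ≤ J) :
    #S.lines ∣ #(orbit G α).toFinset * ((stabilizer G α).relIndex J - 1) := by
  obtain ⟨L, hL⟩ := hS
  have hT : ∀ (g : G) x, g • x ∈ blockPairs J α ↔ x ∈ blockPairs J α := smul_mem_blockPairs_iff
  refine ⟨#(blockPairs J α ∩ L ×ˢ L), ?_⟩
  rw [← S.card_eq_card_lines_mul_card_inter_product htrans hT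
      (fun x hx => (mem_blockPairs.1 hx).1) hL,
    card_eq_card_orbit_mul_card_fiber hT
      (fun x hx => let ⟨_, g, hg, _⟩ := mem_blockPairs.1 hx; ⟨g, hg⟩),
    filter_mk_mem_blockPairs hJ, card_erase_of_mem (Set.mem_toFinset.2 (mem_orbit_self α)),
    ← ncard_orbit_subgroup_eq_relIndex, Set.ncard_eq_toFinset_card']

end RegularLinearSpace

theorem stmt_16_general {P G : Type*} [Fintype P] [DecidableEq P]
    [Group G] [MulAction G P]
    (S : RegularLinearSpace P)
    (htrans : ∀ L ∈ S.lines, ∀ L' ∈ S.lines,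
      ∃ g : G, Finset.image (g • ·) L = L')
    (hnpp : Fintype.card P < S.lines.card)
    (α : P) (H K : Subgroup G)
    (hstab : MulAction.stabilizer G α ≤ H)
    (hHK : H < K)
    (hindex : H.relIndex K = 2) :
    False := by
  have hS : S.lines.Nonempty := card_pos.1 (by omega)
  obtain ⟨m, hm⟩ : ∃ m, (stabilizer G α).relIndex H = m + 1 := by
    refine Nat.exists_eq_succ_of_ne_zero (ncard_orbit_subgroup_eq_relIndex H α ▸ ?_)
    exact ((Set.ncard_pos (Set.toFinite _)).2 ⟨α, mem_orbit_self α⟩).ne'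
  have hdvdH := S.card_lines_dvd htrans hS hstab
  have hdvdK := S.card_lines_dvd htrans hS (hstab.trans hHK.le)
  rw [← Subgroup.relIndex_mul_relIndex _ _ _ hstab hHK.le, hindex, hm] at hdvdK
  rw [hm, Nat.add_sub_cancel] at hdvdH
  have hdvd : #S.lines ∣ #(orbit G α).toFinset := by
    refine (Nat.dvd_add_right (hdvdH.mul_left 2)).1 ?_
    convert hdvdK using 1
    rw [show (m + 1) * 2 - 1 = 2 * m + 1 by omega]
    ring
  have hw : 0 < #(orbit G α).toFinset := card_pos.2 ⟨α, Set.mem_toFinset.2 (mem_orbit_self α)⟩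
  have hbw := Nat.le_of_dvd hw hdvd
  have hwv := card_le_univ (orbit G α).toFinset
  omega

/-- If `G` acts line-transitively on a finite regular linear space which is
not a projective plane (`b > v`), there is no chain of subgroups
`G_α ≤ H < K ≤ G` with `|K : H| = 2`. -/
theorem stmt_16 {P G : Type*} [Fintype P] [DecidableEq P]
    [Group G] [Fintype G] [MulAction G P]
    (S : RegularLinearSpace P)
    (hpres : ∀ (g : G), ∀ L ∈ S.lines, Finset.image (g • ·) L ∈ S.lines)
    (htrans : ∀ L ∈ S.lines, ∀ L' ∈ S.lines,
      ∃ g : G, Finset.image (g • ·) L = L')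
    (hnpp : Fintype.card P < S.lines.card)
    (α : P) (H K : Subgroup G)
    (hstab : MulAction.stabilizer G α ≤ H)
    (hHK : H < K)
    (hindex : H.relIndex K = 2) :
    False :=
  stmt_16_general S htrans hnpp α H K hstab hHK hindex
end

section
/- Suppose a finite group G acts line-transitively on a finite regular linear space S, B is a normal subgroup of G of prime index t which is not line-transitive on S, and B is not point-transitive on S. Then every prime dividing the number b of lines also divides the number v of points; in particular (v−1, b) has no prime divisors, so S is a projective plane (b = v). -/
open Finset MulAction Pointwise

namespace Subgroup

variable {G : Type*} [Group G] {B : Subgroup G}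

theorem sup_eq_top_of_index_prime (hB : B.index.Prime) {K : Subgroup G} (hK : ¬ K ≤ B) :
    B ⊔ K = ⊤ := by
  rcases hB.eq_one_or_self_of_dvd _ (index_dvd_of_le le_sup_left) with h | h
  · exact index_eq_one.1 h
  · refine absurd ((le_sup_right : K ≤ B ⊔ K).trans (relIndex_eq_one.1 ?_)) hK
    have := relIndex_mul_index (le_sup_left : B ≤ B ⊔ K)
    rw [h] at this
    exact (Nat.mul_eq_right hB.ne_zero).1 this

variable {X : Type*} [MulAction G X]

theorem stabilizer_le_of_index_prime [B.Normal] (hB : B.index.Prime) {Y : Set X}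
    (hG : ∀ y ∈ Y, ∀ y' ∈ Y, ∃ g : G, g • y = y')
    (hBY : ¬ ∀ y ∈ Y, ∀ y' ∈ Y, ∃ b ∈ B, b • y = y') {x : X} (hx : x ∈ Y) :
    stabilizer G x ≤ B := by
  by_contra hxB
  have hsmul : ∀ y ∈ Y, ∃ b ∈ B, b • x = y := by
    intro y hy
    obtain ⟨g, rfl⟩ := hG x hx y hy
    have hg : g ∈ (B : Set G) * stabilizer G x := by
      rw [← normal_mul, sup_eq_top_of_index_prime hB hxB]; trivial
    obtain ⟨b, hb, u, hu, rfl⟩ := hg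
    exact ⟨b, hb, by rw [mul_smul, mem_stabilizer_iff.1 hu]⟩
  refine hBY fun y hy y' hy' => ?_
  obtain ⟨b, hb, rfl⟩ := hsmul y hy
  obtain ⟨b', hb', rfl⟩ := hsmul y' hy'
  exact ⟨b' * b⁻¹, mul_mem hb' (inv_mem hb), by rw [mul_smul, inv_smul_smul]⟩

theorem ncard_orbit_mul_index {x : X} (hx : stabilizer G x ≤ B) :
    (orbit B x).ncard * B.index = (orbit G x).ncard := by
  rw [← index_stabilizer, ← index_stabilizer, ← relIndex_mul_index hx]
  rfl

end Subgroup

theorem IsPGroup.exists_mem_orbit_forall_smul_eq {H X : Type*} [Group H] [MulAction H X]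
    {s : ℕ} [Fact s.Prime] {Q : Subgroup H} (hQ : IsPGroup s Q) {x : X}
    (hx : ¬ s ∣ (orbit H x).ncard) : ∃ z ∈ orbit H x, ∀ q ∈ Q, q • z = z := by
  obtain ⟨⟨z, hz⟩, hfix⟩ :=
    hQ.nonempty_fixed_point_of_prime_not_dvd_card (orbit H x) (by rwa [Nat.card_coe_set_eq])
  exact ⟨z, hz, fun q hq => congrArg Subtype.val (hfix ⟨q, hq⟩)⟩

namespace RegularLinearSpace

variable {P : Type*} [Fintype P] [DecidableEq P] (S : RegularLinearSpace P)

theorem card_filter_mem_and_mem {p q : P} (hpq : p ≠ q) :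
    #{L ∈ S.lines | p ∈ L ∧ q ∈ L} = 1 := by
  obtain ⟨L, hL, huniq⟩ := S.exists_unique_line p q hpq
  exact card_eq_one.2 ⟨L, by ext M; simpa using ⟨huniq M, fun h => h ▸ hL⟩⟩

theorem eq_of_mem_of_mem {L M : Finset P} (hL : L ∈ S.lines) (hM : M ∈ S.lines) {p q : P}
    (hpq : p ≠ q) (hpL : p ∈ L) (hqL : q ∈ L) (hpM : p ∈ M) (hqM : q ∈ M) : L = M :=
  (S.exists_unique_line p q hpq).unique ⟨hL, hpL, hqL⟩ ⟨hM, hpM, hqM⟩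

theorem card_inter_le_one {L M : Finset P} (hL : L ∈ S.lines) (hM : M ∈ S.lines) (hLM : L ≠ M) :
    #(L ∩ M) ≤ 1 :=
  card_le_one.2 fun p hp q hq => by
    by_contra hpq
    simp only [mem_inter] at hp hq
    exact hLM (S.eq_of_mem_of_mem hL hM hpq hp.1 hq.1 hp.2 hq.2)

theorem card_lines_mul_k : #S.lines * S.k = Fintype.card P * S.r := by
  rw [← sum_card S.point_deg, ← smul_eq_mul, ← sum_const]
  exact sum_congr rfl fun L hL => (S.line_card L hL).symm

theorem sum_card_inter_mul_card_inter {A₁ A₂ : Finset P} (hd : Disjoint A₁ A₂) :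
    ∑ L ∈ S.lines, #(A₁ ∩ L) * #(A₂ ∩ L) = #A₁ * #A₂ := by
  calc ∑ L ∈ S.lines, #(A₁ ∩ L) * #(A₂ ∩ L)
      = ∑ L ∈ S.lines, ∑ x ∈ A₁ ×ˢ A₂, if x.1 ∈ L ∧ x.2 ∈ L then 1 else 0 := by
        refine sum_congr rfl fun L _ => ?_
        rw [← card_product, ← product_inter_product, ← filter_mem_eq_inter, card_filter]
        simp only [mem_product]
    _ = ∑ x ∈ A₁ ×ˢ A₂, 1 := by
        rw [sum_comm]
        refine sum_congr rfl fun x hx => ?_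
        rw [← card_filter]
        exact S.card_filter_mem_and_mem
          (disjoint_left.1 hd (mem_product.1 hx).1 <| · ▸ (mem_product.1 hx).2)
    _ = #A₁ * #A₂ := by rw [sum_const, smul_eq_mul, mul_one, card_product]

theorem r_mul_k_sub_one (p : P) : S.r * (S.k - 1) = Fintype.card P - 1 := by
  have h := S.sum_card_inter_mul_card_inter (disjoint_singleton_left.2 (notMem_erase p univ))
  rw [card_singleton, one_mul, card_erase_of_mem (mem_univ p), card_univ] at h
  rw [← h, ← S.point_deg p, ← smul_eq_mul, ← sum_const, sum_filter]
  refine sum_congr rfl fun L hL => ?_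
  by_cases hp : p ∈ L
  · rw [if_pos hp, singleton_inter_of_mem hp, card_singleton, one_mul, erase_inter, univ_inter,
      card_erase_of_mem hp, S.line_card L hL]
  · rw [if_neg hp, singleton_inter_of_notMem hp, card_empty, zero_mul]

theorem k_le_r {L : Finset P} (hL : L ∈ S.lines) {x : P} (hx : x ∉ L) : S.k ≤ S.r :=
  calc S.k = ∑ M ∈ S.lines, #({x} ∩ M) * #(L ∩ M) := by
        rw [S.sum_card_inter_mul_card_inter (disjoint_singleton_left.2 hx), card_singleton,
          one_mul, S.line_card L hL]
    _ ≤ ∑ M ∈ S.lines, if x ∈ M then 1 else 0 := by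
        refine sum_le_sum fun M hM => ?_
        by_cases hxM : x ∈ M
        · rw [singleton_inter_of_mem hxM, card_singleton, one_mul, if_pos hxM]
          exact S.card_inter_le_one hL hM (ne_of_mem_of_not_mem' hxM hx).symm
        · rw [singleton_inter_of_notMem hxM, card_empty, zero_mul]
          exact Nat.zero_le _
    _ = S.r := by rw [← card_filter, S.point_deg]

theorem exists_notMem_line (hb : 1 < #S.lines) : ∃ L ∈ S.lines, ∃ x, x ∉ L := by
  obtain ⟨L, hL, M, hM, hLM⟩ := one_lt_card.1 hb
  by_contra! hall
  have hML : M ∩ L = M := inter_eq_left.2 fun x _ => hall L hL x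
  have := S.card_inter_le_one hM hL (Ne.symm hLM)
  rw [hML, S.line_card M hM] at this
  exact absurd S.two_le_k (by omega)

theorem card_le_card_lines (hb : 1 < #S.lines) : Fintype.card P ≤ #S.lines := by
  obtain ⟨L, hL, x, hx⟩ := S.exists_notMem_line hb
  refine Nat.le_of_mul_le_mul_right ?_ (by linarith [S.two_le_k] : 0 < S.k)
  rw [S.card_lines_mul_k]
  exact Nat.mul_le_mul_left _ (S.k_le_r hL hx)

theorem card_lines_eq_card_of_prime_dvd (hb : 1 < #S.lines)
    (h : ∀ p : ℕ, p.Prime → p ∣ #S.lines → p ∣ Fintype.card P) :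
    #S.lines = Fintype.card P := by
  obtain ⟨-, -, x, -⟩ := S.exists_notMem_line hb
  have hv : 0 < Fintype.card P := Fintype.card_pos_iff.2 ⟨x⟩
  have hcop : Nat.Coprime #S.lines (Fintype.card P - 1) := Nat.coprime_of_dvd' fun p _ hpb hpv => by
    simpa [Nat.sub_sub_self hv] using Nat.dvd_sub (h p ‹_› hpb) hpv
  have hdvd : #S.lines ∣ Fintype.card P * (Fintype.card P - 1) :=
    ⟨S.k * (S.k - 1), by rw [← S.r_mul_k_sub_one x, ← mul_assoc, ← S.card_lines_mul_k]; ring⟩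
  exact (Nat.le_of_dvd hv (hcop.dvd_of_dvd_mul_right hdvd)).antisymm (S.card_le_card_lines hb)

def IsUniform (A : Finset P) : Prop :=
  ∃ c, ∀ L ∈ S.lines, #(A ∩ L) = c

theorem card_lines_le_one_of_isUniform {A₁ A₂ : Finset P} (h₁ : S.IsUniform A₁)
    (h₂ : S.IsUniform A₂) (hd : Disjoint A₁ A₂) (hA₁ : A₁.Nonempty) (hA₂ : A₂.Nonempty) :
    #S.lines ≤ 1 := by
  obtain ⟨c₁, hc₁⟩ := h₁
  obtain ⟨c₂, hc₂⟩ := h₂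
  have e₁ : #S.lines * c₁ = #A₁ * S.r := by
    rw [← sum_card_inter fun p _ => S.point_deg p, sum_congr rfl hc₁, sum_const, smul_eq_mul]
  have e₂ : #S.lines * c₂ = #A₂ * S.r := by
    rw [← sum_card_inter fun p _ => S.point_deg p, sum_congr rfl hc₂, sum_const, smul_eq_mul]
  have e₁₂ : #S.lines * (c₁ * c₂) = #A₁ * #A₂ := by
    rw [← S.sum_card_inter_mul_card_inter hd, sum_congr rfl fun L hL => by rw [hc₁ L hL, hc₂ L hL],
      sum_const, smul_eq_mul]
  have hb : #S.lines = S.r * S.r := by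
    refine Nat.eq_of_mul_eq_mul_left (Nat.mul_pos hA₁.card_pos hA₂.card_pos) ?_
    calc #A₁ * #A₂ * #S.lines = #S.lines * c₁ * (#S.lines * c₂) := by rw [← e₁₂]; ring
      _ = #A₁ * #A₂ * (S.r * S.r) := by rw [e₁, e₂]; ring
  obtain ⟨x, -⟩ := hA₁
  rcases Nat.eq_zero_or_pos S.r with hr | hr
  · simp [hb, hr]
  have hv : Fintype.card P = S.r * S.k := by
    refine Nat.eq_of_mul_eq_mul_left hr ?_
    rw [mul_comm, ← S.card_lines_mul_k, hb, mul_assoc]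
  have hrk := S.r_mul_k_sub_one x
  rw [hv, Nat.mul_sub_one] at hrk
  have : S.r ≤ S.r * S.k := Nat.le_mul_of_pos_right _ (by linarith [S.two_le_k])
  have hr1 : S.r = 1 := by omega
  simp [hb, hr1]

section Action

variable {G : Type*} [Group G] [MulAction G P]

theorem isUniform_of_smul_eq (htrans : ∀ L ∈ S.lines, ∀ L' ∈ S.lines, ∃ g : G, g • L = L')
    {A : Finset P} (hA : ∀ g : G, g • A = A) : S.IsUniform A := by
  rcases S.lines.eq_empty_or_nonempty with h | ⟨L₀, hL₀⟩
  · exact ⟨0, by simp [h]⟩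
  refine ⟨#(A ∩ L₀), fun L hL => ?_⟩
  obtain ⟨g, rfl⟩ := htrans L₀ hL₀ L hL
  rw [← card_smul_finset g (A ∩ L₀), smul_finset_inter, hA]

theorem exists_smul_eq_of_lines_transitive
    (htrans : ∀ L ∈ S.lines, ∀ L' ∈ S.lines, ∃ g : G, g • L = L') (hb : 1 < #S.lines)
    (x y : P) : ∃ g : G, g • x = y := by
  classical
  by_contra hxy
  have hinv (z : P) (g : G) : g • (orbit G z).toFinset = (orbit G z).toFinset :=
    coe_injective (by rw [coe_smul_finset, Set.coe_toFinset, smul_orbit])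
  have hd : Disjoint (orbit G x).toFinset (orbit G y).toFinset := by
    refine Set.disjoint_toFinset.2 (Set.disjoint_left.2 fun z hzx hzy => hxy ?_)
    rw [← mem_orbit_iff, ← orbit_eq_iff.2 hzx, orbit_eq_iff.2 hzy]
    exact mem_orbit_self y
  have := S.card_lines_le_one_of_isUniform (S.isUniform_of_smul_eq htrans (hinv x))
    (S.isUniform_of_smul_eq htrans (hinv y)) hd ⟨x, by simp⟩ ⟨y, by simp⟩
  omega

theorem prime_dvd_ncard_orbit [Finite G]
    (hpres : ∀ g : G, ∀ L ∈ S.lines, g • L ∈ S.lines) {s : ℕ} [Fact s.Prime]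
    (hs : ∀ L ∈ S.lines, s ∣ (orbit G L).ncard) {x y : P} (hxy : y ∉ orbit G x) :
    s ∣ (orbit G x).ncard ∨ s ∣ (orbit G y).ncard := by
  by_contra! h
  obtain ⟨Q⟩ : Nonempty (Sylow s G) := Sylow.nonempty
  obtain ⟨z₁, hz₁, hQz₁⟩ := Q.isPGroup'.exists_mem_orbit_forall_smul_eq h.1
  obtain ⟨z₂, hz₂, hQz₂⟩ := Q.isPGroup'.exists_mem_orbit_forall_smul_eq h.2
  have hz : z₁ ≠ z₂ := by
    rintro rfl
    rw [← orbit_eq_iff.2 hz₁, orbit_eq_iff.2 hz₂] at hxy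
    exact hxy (mem_orbit_self y)
  obtain ⟨L, ⟨hL, h₁, h₂⟩, -⟩ := S.exists_unique_line z₁ z₂ hz
  have hQL : (Q : Subgroup G) ≤ stabilizer G L := fun q hq =>
    S.eq_of_mem_of_mem (hpres q L hL) hL hz (hQz₁ q hq ▸ smul_mem_smul_finset h₁)
      (hQz₂ q hq ▸ smul_mem_smul_finset h₂) h₁ h₂
  exact Q.not_dvd_index ((index_stabilizer G L ▸ hs L hL).trans (Subgroup.index_dvd_of_le hQL))

end Action

end RegularLinearSpace

/-- If `G` acts line-transitively on a finite regular linear space `S`, and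
`B` is a normal subgroup of prime index which is neither line-transitive nor
point-transitive on `S`, then every prime dividing `b` divides `v`, and `S`
is a projective plane, i.e. `b = v`. -/
theorem stmt_17 {P G : Type*} [Fintype P] [DecidableEq P]
    [Group G] [Fintype G] [MulAction G P]
    (S : RegularLinearSpace P)
    (hpres : ∀ (g : G), ∀ L ∈ S.lines, Finset.image (g • ·) L ∈ S.lines)
    (htrans : ∀ L ∈ S.lines, ∀ L' ∈ S.lines,
      ∃ g : G, Finset.image (g • ·) L = L')
    (B : Subgroup G) (hBnormal : B.Normal)
    (t : ℕ) (ht : t.Prime) (hindex : B.index = t)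
    (hBnotline : ¬ ∀ L ∈ S.lines, ∀ L' ∈ S.lines,
      ∃ g ∈ B, Finset.image (g • ·) L = L')
    (hBnotpoint : ¬ ∀ p q : P, ∃ g ∈ B, g • p = q) :
    (∀ p : ℕ, p.Prime → p ∣ S.lines.card → p ∣ Fintype.card P) ∧
    S.lines.card = Fintype.card P := by
  have hB : B.index.Prime := hindex ▸ ht
  have hb : 1 < #S.lines := by
    by_contra! h
    exact hBnotline fun L hL L' hL' => ⟨1, B.one_mem, by simpa using card_le_one.1 h L hL L' hL'⟩
  have hGtrans := S.exists_smul_eq_of_lines_transitive htrans hb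
  have hv (x : P) : (orbit B x).ncard * t = Fintype.card P := by
    have hstab := Subgroup.stabilizer_le_of_index_prime hB (Y := Set.univ)
      (fun y _ y' _ => hGtrans y y') (by simpa using hBnotpoint) (Set.mem_univ x)
    rw [← hindex, Subgroup.ncard_orbit_mul_index hstab,
      (Set.eq_univ_of_forall (hGtrans x) : orbit G x = _), Set.ncard_univ, Nat.card_eq_fintype_card]
  have hbL {L : Finset P} (hL : L ∈ S.lines) : (orbit B L).ncard * t = #S.lines := by
    have hstab := Subgroup.stabilizer_le_of_index_prime hB htrans hBnotline hL
    rw [← hindex, Subgroup.ncard_orbit_mul_index hstab, ← Set.ncard_coe_finset]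
    congr
    exact Set.ext fun L' => ⟨by rintro ⟨g, rfl⟩; exact hpres g L hL, htrans L hL L'⟩
  have hdvd (s : ℕ) (hs : s.Prime) (hsb : s ∣ #S.lines) : s ∣ Fintype.card P := by
    have : Fact s.Prime := ⟨hs⟩
    by_contra hsv
    obtain ⟨x, y, hxy⟩ : ∃ x y : P, y ∉ orbit B x := by simpa [mem_orbit_iff] using hBnotpoint
    have hst : ¬ s ∣ t := fun h => hsv (h.trans (Dvd.intro_left _ (hv x)))
    rcases S.prime_dvd_ncard_orbit (G := B) (fun g => hpres g)
      (fun L hL => (hs.dvd_mul.1 (hbL hL ▸ hsb)).resolve_right hst) hxy with h | h <;>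
    exact hsv (h.trans (Dvd.intro _ (hv _)))
  exact ⟨hdvd, S.card_lines_eq_card_of_prime_dvd hb hdvd⟩
end

section
/- Let q be a prime power with q > 7, and set v = q(q−1)(q²+q+1)/2. If b divides q(q+1)(q²+q+1)(q−1)(q−2)/8 and b also divides q²(q+1)(q²+q+1)(q−1)/4, then b divides q(q+1)(q²+q+1)(q−1)/(4·gcd(2,q−1)). -/
private lemma dvd_key {b c x y : ℕ} (h1 : b ∣ c * x) (h2 : b ∣ c * y)
    (hxy : Nat.Coprime x y) : b ∣ c := by
  have h := Nat.dvd_gcd h1 h2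
  rwa [Nat.gcd_mul_left, hxy, mul_one] at h

/-- For a prime power `q > 7` with `v = q(q-1)(q²+q+1)/2`: if `b` divides
`q(q+1)(q²+q+1)(q-1)(q-2)/8` and `b` divides `q²(q+1)(q²+q+1)(q-1)/4`, then
`b` divides `q(q+1)(q²+q+1)(q-1)/(4·gcd(2,q-1))`. -/
theorem stmt_18 (q b v : ℕ) (hq : 7 < q) (hpp : IsPrimePow q)
    (hv : 2 * v = q * (q - 1) * (q ^ 2 + q + 1))
    (h1 : b ∣ q * (q + 1) * (q ^ 2 + q + 1) * (q - 1) * (q - 2) / 8)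
    (h2 : b ∣ q ^ 2 * (q + 1) * (q ^ 2 + q + 1) * (q - 1) / 4) :
    b ∣ q * (q + 1) * (q ^ 2 + q + 1) * (q - 1) / (4 * Nat.gcd 2 (q - 1)) := by
  clear hv
  rcases Nat.even_or_odd q with he | ho
  · -- q even: q = 2^n with n ≥ 3, so 8 ∣ q
    obtain ⟨p, n, hp, hn, hpn⟩ := hpp
    have hp' : p.Prime := hp.nat_prime
    have h2p : (2:ℕ) ∣ p := by
      have h := he.two_dvd
      rw [← hpn] at h
      exact Nat.Prime.dvd_of_dvd_pow Nat.prime_two h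
    have hp2 : p = 2 := ((Nat.prime_dvd_prime_iff_eq Nat.prime_two hp').mp h2p).symm
    subst hp2
    have h3n : 3 ≤ n := by
      by_contra h
      interval_cases n <;> omega
    have h8q : (8:ℕ) ∣ q := by
      rw [← hpn, show (8:ℕ) = 2 ^ 3 by norm_num]
      exact pow_dvd_pow 2 h3n
    obtain ⟨m, hm⟩ := h8q
    have hm1 : 1 ≤ m := by omega
    have hgcd : Nat.gcd 2 (q - 1) = 1 :=
      Nat.coprime_two_left.mpr ⟨4 * m - 1, by omega⟩
    rw [hgcd, mul_one]
    -- c = q(q+1)X(q-1)/4, x = 4m-1, y = q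
    set X := q ^ 2 + q + 1 with hX
    have e1 : q * (q + 1) * X * (q - 1) * (q - 2) / 8
        = (q * (q + 1) * X * (q - 1) / 4) * (4 * m - 1) := by
      have hq2 : q - 2 = 2 * (4 * m - 1) := by omega
      have hG : q * (q + 1) * X * (q - 1) = 4 * (2 * m * ((q + 1) * X * (q - 1))) := by
        rw [hm]; ring
      rw [hq2, hG, Nat.mul_div_cancel_left _ (by norm_num : (0:ℕ) < 4),
        show 4 * (2 * m * ((q + 1) * X * (q - 1))) * (2 * (4 * m - 1))
          = 8 * (2 * m * ((q + 1) * X * (q - 1)) * (4 * m - 1)) by ring,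
        Nat.mul_div_cancel_left _ (by norm_num : (0:ℕ) < 8)]
    have e2 : q ^ 2 * (q + 1) * X * (q - 1) / 4
        = (q * (q + 1) * X * (q - 1) / 4) * q := by
      have hG : q * (q + 1) * X * (q - 1) = 4 * (2 * m * ((q + 1) * X * (q - 1))) := by
        rw [hm]; ring
      have hG2 : q ^ 2 * (q + 1) * X * (q - 1) = 4 * (2 * m * ((q + 1) * X * (q - 1)) * q) := by
        rw [hm]; ring
      rw [hG, hG2, Nat.mul_div_cancel_left _ (by norm_num : (0:ℕ) < 4),
        Nat.mul_div_cancel_left _ (by norm_num : (0:ℕ) < 4)]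
    rw [e1] at h1
    rw [e2] at h2
    refine dvd_key h1 h2 ?_
    -- gcd (4m-1) q = 1 since q = 8m and 4m-1 odd
    have c2' : Nat.Coprime (4 * m - 1) 2 := Nat.coprime_two_right.mpr ⟨2 * m - 1, by omega⟩
    have c4 : Nat.Coprime (4 * m - 1) (4 * m) := by
      have h := Nat.coprime_add_self_right.mpr (Nat.coprime_one_right (4 * m - 1))
      rwa [show 1 + (4 * m - 1) = 4 * m by omega] at h
    have h := c2'.mul_right c4
    rwa [show 2 * (4 * m) = q by omega] at h
  · -- q odd
    have hgcd : Nat.gcd 2 (q - 1) = 2 := by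
      obtain ⟨t, ht⟩ := ho
      exact Nat.gcd_eq_left ⟨t, by omega⟩
    rw [hgcd]
    set X := q ^ 2 + q + 1 with hX
    obtain ⟨t, ht⟩ := ho
    have htt : ∃ u, t * (t + 1) = 2 * u := (Nat.even_mul_succ_self t).elim (fun u hu => ⟨u, by omega⟩)
    obtain ⟨u, hu⟩ := htt
    have hG : q * (q + 1) * X * (q - 1) = 8 * (q * X * u) := by
      have h1' : q - 1 = 2 * t := by omega
      have h2' : q + 1 = 2 * (t + 1) := by omega
      rw [h1', h2', show q * (2 * (t+1)) * X * (2 * t) = 2 * (t * (t+1)) * (q * X) * 2 by ring, hu]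
      ring
    have e1 : q * (q + 1) * X * (q - 1) * (q - 2) / 8 = (q * X * u) * (q - 2) := by
      rw [hG, show 8 * (q * X * u) * (q - 2) = 8 * (q * X * u * (q - 2)) by ring,
        Nat.mul_div_cancel_left _ (by norm_num : (0:ℕ) < 8)]
    have e2 : q ^ 2 * (q + 1) * X * (q - 1) / 4 = (q * X * u) * (2 * q) := by
      have hG2 : q ^ 2 * (q + 1) * X * (q - 1) = 4 * (q * X * u * (2 * q)) := by
        have h1' : q - 1 = 2 * t := by omega
        have h2' : q + 1 = 2 * (t + 1) := by omega
        rw [h1', h2', show q ^ 2 * (2 * (t+1)) * X * (2 * t) = 2 * (t * (t+1)) * (q * X * q) * 2 by ring, hu]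
        ring
      rw [hG2, Nat.mul_div_cancel_left _ (by norm_num : (0:ℕ) < 4)]
    have e3 : q * (q + 1) * X * (q - 1) / (4 * 2) = q * X * u := by
      rw [hG, show (4 * 2 : ℕ) = 8 from rfl, Nat.mul_div_cancel_left _ (by norm_num : (0:ℕ) < 8)]
    rw [e1] at h1
    rw [e2] at h2
    rw [e3]
    refine dvd_key h1 h2 ?_
    have c2 : Nat.Coprime (q - 2) 2 := Nat.coprime_two_right.mpr ⟨t - 1, by omega⟩
    have cq : Nat.Coprime (q - 2) q := by
      have h := Nat.coprime_add_self_right.mpr c2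
      rwa [show 2 + (q - 2) = q by omega] at h
    exact c2.mul_right cq
end
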